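/- arXiv:1704.00765 — 6 statements merged into one kernel-verified Lean document; each statement's English description precedes it below -/
import Mathlib

section
/- Let P_{G,c} be the st-connectivity span program of a weighted multigraph G. A vector |w⟩ in the span of directed edges satisfies A|w⟩ = |s⟩ - |t⟩ if and only if it arises from a unit st-flow: specifically, if θ is a unit st-flow on G then |w⟩ = (1/2)Σ_{(u,v,λ)} (θ(u,v,λ)/√c({u,v},λ)) |u,v,λ⟩ satisfies A|w⟩ = τ; conversely, if A|w⟩ = τ, then θ(u,v,λ) := √c({u,v},λ)(⟨w|u,v,λ⟩ - ⟨w|v,u,λ⟩) is a unit st-flow on G. -/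
open scoped ENNReal

namespace STConn

variable {V E : Type*}

/-- `v` is an endpoint of edge `e`. -/
def Touches (ends : E → V × V) (e : E) (v : V) : Prop :=
  (ends e).1 = v ∨ (ends e).2 = v

/-- Net flow out of vertex `v` for an edge-valued function `θ` (value along the
fixed orientation of each edge). -/
noncomputable def netflow [Fintype E] [DecidableEq V] (ends : E → V × V) (θ : E → ℝ) (v : V) : ℝ :=
  ∑ e, θ e * ((if (ends e).1 = v then (1:ℝ) else 0) - (if (ends e).2 = v then 1 else 0))

/-- `θ` is a unit `st`-flow: net flow `+1` at `s`, `-1` at `t`, `0` elsewhere. -/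
def IsUnitFlow [Fintype E] [DecidableEq V] (ends : E → V × V) (s t : V) (θ : E → ℝ) : Prop :=
  ∀ v, netflow ends θ v = (if v = s then (1:ℝ) else 0) - (if v = t then 1 else 0)

/-- Energy of a flow with respect to edge weights `c`. -/
noncomputable def energy [Fintype E] (c : E → ℝ) (θ : E → ℝ) : ℝ :=
  ∑ e, θ e ^ 2 / c e

/-- Effective resistance between `s` and `t`, restricted to flows supported on `S`
(taking value `∞` if no unit `st`-flow supported on `S` exists). -/
noncomputable def effResOn [Fintype E] [DecidableEq V] (ends : E → V × V) (c : E → ℝ)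
    (S : Set E) (s t : V) : ℝ≥0∞ :=
  ⨅ θ : {θ : E → ℝ // IsUnitFlow ends s t θ ∧ ∀ e ∉ S, θ e = 0},
    ENNReal.ofReal (energy c θ.1)

/-- Effective resistance between `s` and `t` in the network `(ends, c)`. -/
noncomputable def effRes [Fintype E] [DecidableEq V] (ends : E → V × V) (c : E → ℝ)
    (s t : V) : ℝ≥0∞ :=
  effResOn ends c Set.univ s t

end STConn
namespace STConn

variable {V E : Type*}

/-- Endpoints of a directed edge: `(e, true)` is `e` with its fixed orientation,
`(e, false)` is the reversal. -/
def dend (ends : E → V × V) (p : E × Bool) : V × V :=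
  if p.2 then ends p.1 else ((ends p.1).2, (ends p.1).1)

/-- The span program operator `A = ∑ √c(e) (|u⟩-|v⟩)⟨u,v,λ|` of the
`st`-connectivity span program `P_{G,c}`, applied to a vector `w` of the space
`H` spanned by directed edges; the result lives in the vertex space `U`. -/
noncomputable def Amap [Fintype E] [DecidableEq V] (ends : E → V × V) (c : E → ℝ)
    (w : E × Bool → ℝ) : V → ℝ := fun v =>
  ∑ p : E × Bool, Real.sqrt (c p.1) * w p *
    ((if (dend ends p).1 = v then (1:ℝ) else 0) - (if (dend ends p).2 = v then 1 else 0))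

/-- The target vector `τ = |s⟩ - |t⟩`. -/
def tau [DecidableEq V] (s t : V) : V → ℝ := fun v =>
  (if v = s then (1:ℝ) else 0) - (if v = t then 1 else 0)

/-- A unit `st`-flow presented as an antisymmetric function on directed edges. -/
def IsUnitFlowD [Fintype E] [DecidableEq V] (ends : E → V × V) (s t : V)
    (θ : E × Bool → ℝ) : Prop :=
  (∀ p : E × Bool, θ (p.1, !p.2) = -θ p) ∧
  ∀ v, (∑ p : E × Bool, θ p * (if (dend ends p).1 = v then (1:ℝ) else 0)) = tau s t v

end STConn

/-!
A vector `w` on directed edges enters `A` only through the flow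
`θ_w(p) = √c(p) (w p - w p̄)`, `p̄` the reversal of `p`: reindexing by `p ↦ p̄` turns the
`-|v⟩` part of `A` into a `+|v⟩` part, so `A w` is the outflow of `θ_w`.
Hence `A w = τ` says exactly that `θ_w` is a unit `st`-flow, and for an antisymmetric `θ`
the choice `w = θ / (2√c)` gives back `θ_w = θ`.
-/

namespace STConn

variable {V E : Type*}

theorem dend_reverse (ends : E → V × V) (p : E × Bool) :
    dend ends (p.1, !p.2) = ((dend ends p).2, (dend ends p).1) := by
  obtain ⟨e, _ | _⟩ := p <;> simp [dend]

noncomputable def flowOf (c : E → ℝ) (w : E × Bool → ℝ) (p : E × Bool) : ℝ :=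
  Real.sqrt (c p.1) * (w p - w (p.1, !p.2))

theorem flowOf_antisymm (c : E → ℝ) (w : E × Bool → ℝ) (p : E × Bool) :
    flowOf c w (p.1, !p.2) = -flowOf c w p := by
  simp only [flowOf, Bool.not_not]
  ring

theorem flowOf_half_div_sqrt {c : E → ℝ} (hc : ∀ e, 0 < c e) {θ : E × Bool → ℝ}
    (hθ : ∀ p : E × Bool, θ (p.1, !p.2) = -θ p) :
    flowOf c (fun p => 1 / 2 * (θ p / Real.sqrt (c p.1))) = θ := by
  funext p
  have := (Real.sqrt_pos.mpr (hc p.1)).ne'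
  simp only [flowOf, hθ p]
  field_simp
  ring

variable [Fintype E]

theorem sum_comp_reverse {M : Type*} [AddCommMonoid M] (f : E × Bool → M) :
    ∑ p : E × Bool, f (p.1, !p.2) = ∑ p, f p :=
  ((Equiv.refl E).prodCongr Equiv.boolNot).sum_comp f

variable [DecidableEq V]

noncomputable def outflow (ends : E → V × V) (θ : E × Bool → ℝ) (v : V) : ℝ :=
  ∑ p : E × Bool, θ p * if (dend ends p).1 = v then 1 else 0

theorem sum_mul_ite_snd_eq (ends : E → V × V) (f : E × Bool → ℝ) (v : V) :
    ∑ p : E × Bool, f p * (if (dend ends p).2 = v then 1 else 0) =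
      ∑ p : E × Bool, f (p.1, !p.2) * if (dend ends p).1 = v then 1 else 0 := by
  rw [← sum_comp_reverse]
  simp [dend_reverse]

theorem amap_eq_outflow_flowOf (ends : E → V × V) (c : E → ℝ) (w : E × Bool → ℝ) :
    Amap ends c w = outflow ends (flowOf c w) := by
  funext v
  simp only [Amap, outflow, flowOf, mul_sub, sub_mul, Finset.sum_sub_distrib, sum_mul_ite_snd_eq]

end STConn

open STConn in
/-- Positive witnesses of the `st`-connectivity span program `P_{G,c}`
correspond exactly to unit `st`-flows: if `θ` is a unit `st`-flow then
`|w⟩ = (1/2) Σ_p (θ(p)/√c(p)) |p⟩` satisfies `A|w⟩ = τ`, and conversely for any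
`w` with `A|w⟩ = τ` the function `θ(p) = √c(p) (⟨w|p⟩ - ⟨w|p̄⟩)` is a unit
`st`-flow. -/
theorem stmt_5 {V E : Type} [Fintype E] [DecidableEq V]
    (ends : E → V × V) (c : E → ℝ) (hc : ∀ e, 0 < c e) (s t : V) :
    (∀ θ : E × Bool → ℝ, IsUnitFlowD ends s t θ →
      Amap ends c (fun p => (1 / 2) * (θ p / Real.sqrt (c p.1))) = tau s t) ∧
    (∀ w : E × Bool → ℝ, Amap ends c w = tau s t →
      IsUnitFlowD ends s t (fun p => Real.sqrt (c p.1) * (w p - w (p.1, !p.2)))) := by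
  refine ⟨fun θ ⟨hanti, hflow⟩ => ?_, fun w hw => ⟨flowOf_antisymm c w, fun v => ?_⟩⟩
  · rw [amap_eq_outflow_flowOf, flowOf_half_div_sqrt hc hanti]
    exact funext hflow
  · rw [← hw, amap_eq_outflow_flowOf]
    rfl
end

section
/- Let G be a planar multigraph with s,t ∈ V(G) such that G ∪ {{s,t}} is planar, and let c be a positive weight function on E(G). For every input x ∈ {0,1}^{E(G)}, the positive witness size of x in the span program P_{G,c} equals (1/2)·R_{s,t}(G(x), c), where G(x) is the subgraph of G containing exactly the edges e with x_e = 1. -/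
open scoped ENNReal

namespace STConn

variable {V E : Type*}

/-- Positive witness size of input `x` in the span program `P_{G,c}`: the
minimal squared norm of a vector `w ∈ H(x)` (supported on directed edges whose
underlying edge is present in `x`) with `A w = τ`; `∞` if none exists. -/
noncomputable def posWitSize [Fintype E] [DecidableEq V] (ends : E → V × V) (c : E → ℝ)
    (s t : V) (x : E → Bool) : ℝ≥0∞ :=
  ⨅ w : {w : E × Bool → ℝ // Amap ends c w = tau s t ∧
          ∀ p : E × Bool, x p.1 = false → w p = 0},
    ENNReal.ofReal (∑ p : E × Bool, (w.1 p) ^ 2)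

/-- Negative witness size of input `x` in the span program `P_{G,c}`: the
minimal value of `‖ωA‖²` over linear functionals `ω` on the vertex space with
`ωτ = 1` and `ωAΠ_{H(x)} = 0`; `∞` if none exists. -/
noncomputable def negWitSize [Fintype E] [DecidableEq V] (ends : E → V × V) (c : E → ℝ)
    (s t : V) (x : E → Bool) : ℝ≥0∞ :=
  ⨅ ω : {ω : V → ℝ // ω s - ω t = 1 ∧
          ∀ e, x e = true → ω (ends e).1 = ω (ends e).2},
    ENNReal.ofReal (∑ p : E × Bool,
      c p.1 * (ω.1 (dend ends p).1 - ω.1 (dend ends p).2) ^ 2)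

end STConn

section Aux

open STConn

variable {V E : Type} [Fintype E] [DecidableEq V]

private lemma sum_pb (f : E × Bool → ℝ) :
    ∑ p : E × Bool, f p = ∑ e, (f (e, true) + f (e, false)) := by
  rw [Fintype.sum_prod_type]
  simp [add_comm]

private lemma Amap_eq (ends : E → V × V) (c : E → ℝ) (w : E × Bool → ℝ) (v : V) :
    Amap ends c w v
      = netflow ends (fun e => Real.sqrt (c e) * (w (e, true) - w (e, false))) v := by
  unfold Amap netflow
  rw [sum_pb]
  refine Finset.sum_congr rfl fun e _ => ?_
  simp only [dend, if_true, if_false, Bool.false_eq_true]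
  ring

end Aux

open STConn in
/-- For every input `x ∈ {0,1}^{E(G)}`, the positive witness size of `x` in the
`st`-connectivity span program `P_{G,c}` equals one half of the effective
resistance of the subgraph `G(x)` consisting of the edges with `x_e = 1`
(both sides being `∞` when `s` and `t` are disconnected in `G(x)`). -/
theorem stmt_7 {V E : Type} [Fintype E] [DecidableEq V]
    (ends : E → V × V) (c : E → ℝ) (hc : ∀ e, 0 < c e) (s t : V) (hst : s ≠ t)
    (x : E → Bool) :
    posWitSize ends c s t x
      = (1 / 2) * effResOn ends c {e | x e = true} s t := by
  have hhalf : ∀ r : ℝ, (1 / 2 : ℝ≥0∞) * ENNReal.ofReal r = ENNReal.ofReal (r / 2) := by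
    intro r
    rw [ENNReal.ofReal_div_of_pos (by norm_num)]
    norm_num
    rw [ENNReal.div_eq_inv_mul, ← one_div]
  rw [effResOn, ENNReal.mul_iInf_of_ne (by norm_num) (by norm_num)]
  apply le_antisymm
  · refine le_iInf fun θ0 => ?_
    obtain ⟨θ, hθf, hθs⟩ := θ0
    set w : E × Bool → ℝ := fun p => (if p.2 then 1 else -1) * θ p.1 / (2 * Real.sqrt (c p.1))
      with hw
    have hsq : ∀ e, Real.sqrt (c e) ≠ 0 := fun e => ne_of_gt (Real.sqrt_pos.mpr (hc e))
    have hθ' : (fun e => Real.sqrt (c e) * (w (e, true) - w (e, false))) = θ := by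
      funext e
      simp only [hw, if_true, if_false, Bool.false_eq_true]
      field_simp [hsq e]
      ring
    have hA : Amap ends c w = tau s t := by
      funext v
      rw [Amap_eq, hθ']
      rw [hθf v]
      rfl
    have hsupp : ∀ p : E × Bool, x p.1 = false → w p = 0 := by
      intro p hp
      have h0 : θ p.1 = 0 := hθs p.1 (by simp [hp])
      simp [hw, h0]
    refine iInf_le_of_le ⟨w, hA, hsupp⟩ ?_
    rw [hhalf]
    apply ENNReal.ofReal_le_ofReal
    rw [sum_pb, energy, Finset.sum_div]
    refine le_of_eq (Finset.sum_congr rfl fun e _ => ?_)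
    have hce := (hc e).le
    simp only [hw, if_true, if_false, Bool.false_eq_true]
    rw [div_pow, div_pow, mul_pow, mul_pow, Real.sq_sqrt hce]
    field_simp
    ring
  · refine le_iInf fun w0 => ?_
    obtain ⟨w, hA, hsupp⟩ := w0
    set θ : E → ℝ := fun e => Real.sqrt (c e) * (w (e, true) - w (e, false)) with hθ
    have hflow : IsUnitFlow ends s t θ := by
      intro v
      have := congrFun hA v
      rw [Amap_eq] at this
      exact this
    have hsupp' : ∀ e ∉ {e | x e = true}, θ e = 0 := by
      intro e he
      have hx : x e = false := by
        simpa using he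
      simp [hθ, hsupp (e, true) hx, hsupp (e, false) hx]
    refine iInf_le_of_le ⟨θ, hflow, hsupp'⟩ ?_
    rw [hhalf]
    apply ENNReal.ofReal_le_ofReal
    rw [sum_pb, energy, Finset.sum_div]
    refine Finset.sum_le_sum fun e _ => ?_
    have hce := hc e
    simp only [hθ]
    rw [mul_pow, Real.sq_sqrt hce.le]
    rw [mul_div_cancel_left₀ _ (ne_of_gt hce)]
    nlinarith [sq_nonneg (w (e, true) + w (e, false))]
end

section
/- For every read-once AND-OR formula φ on N variables there exists a positive edge-weight function c on E(G_φ) such that W_+(P_{G_φ,c}) · W_-(P_{G_φ,c}) ≤ N, where W_+ = max over 1-inputs x of (1/2)R_{s,t}(G_φ(x),c) and W_- = max over 0-inputs x of 2R_{s',t'}(G'_φ(x),c'). Equivalently, max_{x: φ(x)=1} R_{s,t}(G_φ(x),c) · max_{x: φ(x)=0} R_{s',t'}(G'_φ(x),c') ≤ 4N for some c. -/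
open scoped ENNReal

namespace STConn

/-- Read-once AND-OR formulas on `N` variables (gates have fan-in `k+1`). -/
inductive Formula (N : ℕ) : Type where
  | var : Fin N → Formula N
  | and : (k : ℕ) → (Fin (k + 1) → Formula N) → Formula N
  | or : (k : ℕ) → (Fin (k + 1) → Formula N) → Formula N

namespace Formula

variable {N : ℕ}

/-- Evaluation of a formula on an input. -/
def eval : Formula N → (Fin N → Bool) → Bool
  | .var i, x => x i
  | .and _ fs, x => (List.finRange _).all fun i => (fs i).eval x
  | .or _ fs, x => (List.finRange _).any fun i => (fs i).eval x

/-- The leaves of a formula; these index the edges of the graph `G_φ`. -/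
def Leaves : Formula N → Type
  | .var _ => Unit
  | .and k fs => Σ i : Fin (k + 1), (fs i).Leaves
  | .or k fs => Σ i : Fin (k + 1), (fs i).Leaves

/-- The variable labelling a leaf. -/
def label : (φ : Formula N) → φ.Leaves → Fin N
  | .var i, _ => i
  | .and _ fs, ⟨i, l⟩ => (fs i).label l
  | .or _ fs, ⟨i, l⟩ => (fs i).label l

/-- The internal (non-terminal) vertices of the series-parallel graph `G_φ`:
series composition (for `∧`) introduces `k` junction vertices. -/
def Inner : Formula N → Type
  | .var _ => Empty
  | .and k fs => (Σ i : Fin (k + 1), (fs i).Inner) ⊕ Fin k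
  | .or k fs => Σ i : Fin (k + 1), (fs i).Inner

/-- The vertex set of `G_φ`: internal vertices plus the two terminals
(`Sum.inr true = s`, `Sum.inr false = t`). -/
abbrev Vert (φ : Formula N) : Type := φ.Inner ⊕ Bool

/-- Embedding the vertices of the `i`-th subgraph into a series composition. -/
def vmapAnd (k : ℕ) (fs : Fin (k + 1) → Formula N) (i : Fin (k + 1)) :
    (fs i).Vert → (Formula.and k fs).Vert
  | .inl w => .inl (.inl ⟨i, w⟩)
  | .inr true =>
      if h : i.val = 0 then .inr true
      else .inl (.inr ⟨i.val - 1, by have := i.isLt; omega⟩)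
  | .inr false =>
      if h : i.val = k then .inr false
      else .inl (.inr ⟨i.val, by have := i.isLt; omega⟩)

/-- Embedding the vertices of the `i`-th subgraph into a parallel composition. -/
def vmapOr (k : ℕ) (fs : Fin (k + 1) → Formula N) (i : Fin (k + 1)) :
    (fs i).Vert → (Formula.or k fs).Vert
  | .inl w => .inl ⟨i, w⟩
  | .inr b => .inr b

/-- The endpoints of each edge (= leaf) of the series-parallel graph `G_φ`:
a variable is a single `st`-edge, `∧` composes the subgraphs in series, and
`∨` composes them in parallel. -/
def ends : (φ : Formula N) → φ.Leaves → φ.Vert × φ.Vert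
  | .var _, _ => (.inr true, .inr false)
  | .and k fs, ⟨i, l⟩ =>
      (vmapAnd k fs i ((fs i).ends l).1, vmapAnd k fs i ((fs i).ends l).2)
  | .or k fs, ⟨i, l⟩ =>
      (vmapOr k fs i ((fs i).ends l).1, vmapOr k fs i ((fs i).ends l).2)

/-- The dual formula: swap every `∧` with `∨`. -/
def dualF : Formula N → Formula N
  | .var i => .var i
  | .and k fs => .or k fun i => dualF (fs i)
  | .or k fs => .and k fun i => dualF (fs i)

def leavesFintype : (φ : Formula N) → Fintype φ.Leaves
  | .var _ => inferInstanceAs (Fintype Unit)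
  | .and k fs =>
      letI := fun i => leavesFintype (fs i)
      inferInstanceAs (Fintype (Σ i : Fin (k + 1), (fs i).Leaves))
  | .or k fs =>
      letI := fun i => leavesFintype (fs i)
      inferInstanceAs (Fintype (Σ i : Fin (k + 1), (fs i).Leaves))

instance (φ : Formula N) : Fintype φ.Leaves := leavesFintype φ

def innerDecEq : (φ : Formula N) → DecidableEq φ.Inner
  | .var _ => fun a => a.elim
  | .and k fs =>
      letI := fun i => innerDecEq (fs i)
      inferInstanceAs (DecidableEq ((Σ i : Fin (k + 1), (fs i).Inner) ⊕ Fin k))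
  | .or k fs =>
      letI := fun i => innerDecEq (fs i)
      inferInstanceAs (DecidableEq (Σ i : Fin (k + 1), (fs i).Inner))

instance (φ : Formula N) : DecidableEq φ.Inner := innerDecEq φ

instance (φ : Formula N) : DecidableEq φ.Vert :=
  inferInstanceAs (DecidableEq (φ.Inner ⊕ Bool))

/-- The source terminal `s` of `G_φ`. -/
def src (φ : Formula N) : φ.Vert := .inr true

/-- The sink terminal `t` of `G_φ`. -/
def snk (φ : Formula N) : φ.Vert := .inr false

end Formula
end STConn

/-!
The weights are built by induction on `φ`, keeping the invariant that every `1`-input has a unit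
`s`-`t` flow in `G_φ(x)` of energy at most `n` (the number of leaves) and every `0`-input has a
unit `s'`-`t'` flow in `G'_φ(x)` of energy at most `1` for the dual weights. Since `G'_φ` is the
graph of the De Morgan dual, a gate composes its branches in series in one graph and in parallel
in the other. In series the branch flows concatenate and their energies add; in parallel a single
branch carries the flow. An `∧`-gate therefore keeps the weights of its branches, while at an
`∨`-gate branch `i` is scaled by `nᵢ / n`: this divides its primal energies by `nᵢ / n`, bringing
them to `n`, and multiplies its dual energies by `nᵢ / n`, which sum to `1` in series.
Effective resistances are bounded by these energies, so the product of the two maxima is at most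
`n ≤ N`.
-/

namespace STConn

open Finset

section Network

variable {V E : Type*} [Fintype E] [DecidableEq V]

theorem sum_mul_netflow (ends : E → V × V) (θ : E → ℝ) (g : V → ℝ) {T : Finset V}
    (hT : ∀ e, (ends e).1 ∈ T ∧ (ends e).2 ∈ T) :
    ∑ v ∈ T, g v * netflow ends θ v = ∑ e, θ e * (g (ends e).1 - g (ends e).2) := by
  simp only [netflow, mul_sum]
  rw [sum_comm]
  refine sum_congr rfl fun e _ => ?_
  simp only [mul_sub, mul_ite, mul_one, mul_zero, sum_sub_distrib, sum_ite_eq, (hT e).1,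
    (hT e).2, if_true]
  ring

theorem isUnitFlow_iff (ends : E → V × V) (s t : V) (θ : E → ℝ) :
    IsUnitFlow ends s t θ ↔
      ∀ g : V → ℝ, ∑ e, θ e * (g (ends e).1 - g (ends e).2) = g s - g t := by
  constructor
  · intro h g
    set T := (univ.image fun e => (ends e).1) ∪ (univ.image fun e => (ends e).2) ∪ {s, t}
    have hT : ∀ e, (ends e).1 ∈ T ∧ (ends e).2 ∈ T := fun e => by simp [T]
    rw [← sum_mul_netflow ends θ g hT, sum_congr rfl fun v _ => congrArg (g v * ·) (h v)]
    simp only [mul_sub, mul_ite, mul_one, mul_zero, sum_sub_distrib, sum_ite_eq']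
    simp [T]
  · intro h v
    have hv := h fun w => if w = v then 1 else 0
    rw [netflow]
    convert hv using 2 <;> simp [eq_comm]

def HasUnitFlowLE (ends : E → V × V) (c : E → ℝ) (S : Set E) (s t : V) (B : ℝ) : Prop :=
  ∃ θ, IsUnitFlow ends s t θ ∧ (∀ e ∉ S, θ e = 0) ∧ energy c θ ≤ B

variable {ends : E → V × V} {c : E → ℝ} {S : Set E} {s t : V} {B : ℝ}

theorem HasUnitFlowLE.effResOn_le (h : HasUnitFlowLE ends c S s t B) :
    effResOn ends c S s t ≤ ENNReal.ofReal B := by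
  obtain ⟨θ, hflow, hsupp, hen⟩ := h
  exact (iInf_le _ ⟨θ, hflow, hsupp⟩).trans (ENNReal.ofReal_le_ofReal hen)

theorem energy_const_mul (a : ℝ) (c θ : E → ℝ) :
    energy (fun e => a * c e) θ = energy c θ / a := by
  simp only [energy, sum_div, div_mul_eq_div_div_swap]

theorem HasUnitFlowLE.const_mul (h : HasUnitFlowLE ends c S s t B) {a : ℝ} (ha : 0 < a) :
    HasUnitFlowLE ends (fun e => a * c e) S s t (B / a) := by
  obtain ⟨θ, hflow, hsupp, hen⟩ := h
  exact ⟨θ, hflow, hsupp, by rw [energy_const_mul]; gcongr⟩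

end Network

section Sigma

variable {ι : Type*} [Fintype ι] {E : ι → Type*} [∀ i, Fintype (E i)]

theorem energy_sigma (c θ : ∀ i, E i → ℝ) :
    energy (fun e : Σ i, E i => c e.1 e.2) (fun e => θ e.1 e.2) = ∑ i, energy (c i) (θ i) :=
  Fintype.sum_sigma _

theorem sum_sigma_single [DecidableEq ι] (i : ι) (θ : E i → ℝ) (F : ∀ j, E j → ℝ → ℝ)
    (hF : ∀ j l, F j l 0 = 0) :
    ∑ e : Σ j, E j, F e.1 e.2 (Pi.single (M := fun j => E j → ℝ) i θ e.1 e.2) =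
      ∑ l, F i l (θ l) := by
  rw [Fintype.sum_sigma, Fintype.sum_eq_single i fun j hj => by simp [Pi.single_eq_of_ne hj, hF]]
  simp

theorem energy_sigma_single [DecidableEq ι] (c : ∀ i, E i → ℝ) (i : ι) (θ : E i → ℝ) :
    energy (fun e : Σ i, E i => c e.1 e.2)
      (fun e => Pi.single (M := fun j => E j → ℝ) i θ e.1 e.2) = energy (c i) θ :=
  sum_sigma_single i θ (fun j l x => x ^ 2 / c j l) fun _ _ => by simp

end Sigma

namespace Formula

variable {N k : ℕ}

theorem eval_and_eq_true (fs : Fin (k + 1) → Formula N) (x : Fin N → Bool) :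
    (Formula.and k fs).eval x = true ↔ ∀ i, (fs i).eval x = true := by
  simp [eval]

theorem eval_and_eq_false (fs : Fin (k + 1) → Formula N) (x : Fin N → Bool) :
    (Formula.and k fs).eval x = false ↔ ∃ i, (fs i).eval x = false := by
  simp [eval]

theorem eval_or_eq_true (fs : Fin (k + 1) → Formula N) (x : Fin N → Bool) :
    (Formula.or k fs).eval x = true ↔ ∃ i, (fs i).eval x = true := by
  simp [eval]

theorem eval_or_eq_false (fs : Fin (k + 1) → Formula N) (x : Fin N → Bool) :
    (Formula.or k fs).eval x = false ↔ ∀ i, (fs i).eval x = false := by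
  simp [eval]

/-- The vertex of a series composition between branches `j - 1` and `j`; it is `s` for `j = 0`
and `t` for `j > k`. -/
def seriesJunction (fs : Fin (k + 1) → Formula N) (j : ℕ) : (Formula.and k fs).Vert :=
  if h0 : j = 0 then .inr true
  else if h : j ≤ k then .inl (.inr ⟨j - 1, by omega⟩)
  else .inr false

theorem vmapAnd_src (fs : Fin (k + 1) → Formula N) (i : Fin (k + 1)) :
    vmapAnd k fs i (fs i).src = seriesJunction fs i := by
  have := i.isLt
  by_cases h : i.val = 0 <;> simp [src, vmapAnd, seriesJunction, h, Nat.le_of_lt_succ this]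

theorem vmapAnd_snk (fs : Fin (k + 1) → Formula N) (i : Fin (k + 1)) :
    vmapAnd k fs i (fs i).snk = seriesJunction fs (i + 1) := by
  have := i.isLt
  by_cases h : i.val = k
  · simp [snk, vmapAnd, seriesJunction, h]
  · simp [snk, vmapAnd, seriesJunction, h, show i.val + 1 ≤ k by omega]

theorem isUnitFlow_and {gs : Fin (k + 1) → Formula N} {θ : ∀ i, (gs i).Leaves → ℝ}
    (h : ∀ i, IsUnitFlow (gs i).ends (gs i).src (gs i).snk (θ i)) :
    IsUnitFlow (Formula.and k gs).ends (Formula.and k gs).src (Formula.and k gs).snk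
      (fun e => θ e.1 e.2) := by
  rw [isUnitFlow_iff]
  intro g
  have hbranch (i : Fin (k + 1)) := (isUnitFlow_iff _ _ _ _).1 (h i) (g ∘ vmapAnd k gs i)
  simp only [Function.comp_apply, vmapAnd_src, vmapAnd_snk] at hbranch
  calc _ = ∑ i : Fin (k + 1), (g (seriesJunction gs i) - g (seriesJunction gs (i + 1))) :=
        (Fintype.sum_sigma _).trans (sum_congr rfl fun i _ => hbranch i)
    _ = g (seriesJunction gs 0) - g (seriesJunction gs (k + 1)) := by
        rw [Fin.sum_univ_eq_sum_range
          (fun j => g (seriesJunction gs j) - g (seriesJunction gs (j + 1))), sum_range_sub']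
    _ = _ := by simp [seriesJunction, src, snk]

theorem isUnitFlow_or {gs : Fin (k + 1) → Formula N} (i : Fin (k + 1)) {θ : (gs i).Leaves → ℝ}
    (h : IsUnitFlow (gs i).ends (gs i).src (gs i).snk θ) :
    IsUnitFlow (Formula.or k gs).ends (Formula.or k gs).src (Formula.or k gs).snk
      (fun e => Pi.single (M := fun j => (gs j).Leaves → ℝ) i θ e.1 e.2) := by
  rw [isUnitFlow_iff]
  intro g
  exact (sum_sigma_single i θ
    (fun j l x => x * (g (vmapOr k gs j ((gs j).ends l).1) - g (vmapOr k gs j ((gs j).ends l).2)))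
    fun _ _ => zero_mul _).trans
    ((isUnitFlow_iff _ _ _ _).1 h (g ∘ vmapOr k gs i))

theorem hasUnitFlowLE_and {gs : Fin (k + 1) → Formula N} {c : ∀ i, (gs i).Leaves → ℝ}
    {S : ∀ i, Set (gs i).Leaves} {B : Fin (k + 1) → ℝ}
    (h : ∀ i, HasUnitFlowLE (gs i).ends (c i) (S i) (gs i).src (gs i).snk (B i)) :
    HasUnitFlowLE (Formula.and k gs).ends (fun e => c e.1 e.2) {e | e.2 ∈ S e.1}
      (Formula.and k gs).src (Formula.and k gs).snk (∑ i, B i) := by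
  choose θ hflow hsupp hen using h
  refine ⟨fun e => θ e.1 e.2, isUnitFlow_and hflow, fun e he => hsupp e.1 e.2 he, ?_⟩
  exact (energy_sigma c θ).trans_le (sum_le_sum fun i _ => hen i)

theorem hasUnitFlowLE_or {gs : Fin (k + 1) → Formula N} {c : ∀ i, (gs i).Leaves → ℝ}
    {S : ∀ i, Set (gs i).Leaves} {B : ℝ} (i : Fin (k + 1))
    (h : HasUnitFlowLE (gs i).ends (c i) (S i) (gs i).src (gs i).snk B) :
    HasUnitFlowLE (Formula.or k gs).ends (fun e => c e.1 e.2) {e | e.2 ∈ S e.1}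
      (Formula.or k gs).src (Formula.or k gs).snk B := by
  obtain ⟨θ, hflow, hsupp, hen⟩ := h
  refine ⟨_, isUnitFlow_or i hflow, fun ⟨j, l⟩ hl => ?_, (energy_sigma_single c i θ).trans_le hen⟩
  by_cases hj : j = i
  · subst hj
    simpa using hsupp l hl
  · simp [Pi.single_eq_of_ne hj]

/-- The edge `e†` of `G'_φ` crossing the edge `e` of `G_φ`. -/
def dualEquiv : (φ : Formula N) → φ.Leaves ≃ (dualF φ).Leaves
  | .var _ => Equiv.refl _
  | .and _ fs => Equiv.sigmaCongrRight fun i => dualEquiv (fs i)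
  | .or _ fs => Equiv.sigmaCongrRight fun i => dualEquiv (fs i)

theorem label_dualEquiv_symm : ∀ (φ : Formula N) (l : (dualF φ).Leaves),
    φ.label ((dualEquiv φ).symm l) = (dualF φ).label l
  | .var _, _ => rfl
  | .and _ fs, ⟨i, l⟩ => label_dualEquiv_symm (fs i) l
  | .or _ fs, ⟨i, l⟩ => label_dualEquiv_symm (fs i) l

noncomputable def dualWeights (φ : Formula N) (c : φ.Leaves → ℝ) : (dualF φ).Leaves → ℝ :=
  fun l => (c ((dualEquiv φ).symm l))⁻¹

theorem dualWeights_const_mul (φ : Formula N) (c : φ.Leaves → ℝ) (a : ℝ) :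
    dualWeights φ (fun e => a * c e) = fun l => a⁻¹ * dualWeights φ c l := by
  funext l
  exact mul_inv _ _

/-- Flows certifying `R_{s,t}(G_φ(x), c) ≤ A` on every `1`-input and
`R_{s',t'}(G'_φ(x), c') ≤ B` on every `0`-input. -/
def ResistanceBounds (φ : Formula N) (c : φ.Leaves → ℝ) (A B : ℝ) : Prop :=
  (∀ x, φ.eval x = true →
    HasUnitFlowLE φ.ends c {l | x (φ.label l) = true} φ.src φ.snk A) ∧
  (∀ x, φ.eval x = false →
    HasUnitFlowLE (dualF φ).ends (dualWeights φ c) {l | x ((dualF φ).label l) = false}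
      (dualF φ).src (dualF φ).snk B)

theorem ResistanceBounds.const_mul {φ : Formula N} {c : φ.Leaves → ℝ} {A B : ℝ}
    (h : ResistanceBounds φ c A B) {a : ℝ} (ha : 0 < a) :
    ResistanceBounds φ (fun e => a * c e) (A / a) (a * B) := by
  refine ⟨fun x hx => (h.1 x hx).const_mul ha, fun x hx => ?_⟩
  rw [dualWeights_const_mul, show a * B = B / a⁻¹ by rw [div_inv_eq_mul, mul_comm]]
  exact (h.2 x hx).const_mul (inv_pos.2 ha)

theorem ResistanceBounds.and {fs : Fin (k + 1) → Formula N} {c : ∀ i, (fs i).Leaves → ℝ}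
    {A : Fin (k + 1) → ℝ} {B : ℝ} (h : ∀ i, ResistanceBounds (fs i) (c i) (A i) B) :
    ResistanceBounds (Formula.and k fs) (fun e => c e.1 e.2) (∑ i, A i) B := by
  refine ⟨fun x hx => hasUnitFlowLE_and fun i => (h i).1 x ?_, fun x hx => ?_⟩
  · exact (eval_and_eq_true fs x).1 hx i
  · obtain ⟨i, hi⟩ := (eval_and_eq_false fs x).1 hx
    exact hasUnitFlowLE_or (c := fun j => dualWeights (fs j) (c j))
      (S := fun j => {l | x ((dualF (fs j)).label l) = false}) i ((h i).2 x hi)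

theorem ResistanceBounds.or {fs : Fin (k + 1) → Formula N} {c : ∀ i, (fs i).Leaves → ℝ}
    {A : ℝ} {B : Fin (k + 1) → ℝ} (h : ∀ i, ResistanceBounds (fs i) (c i) A (B i)) :
    ResistanceBounds (Formula.or k fs) (fun e => c e.1 e.2) A (∑ i, B i) := by
  refine ⟨fun x hx => ?_, fun x hx => ?_⟩
  · obtain ⟨i, hi⟩ := (eval_or_eq_true fs x).1 hx
    exact hasUnitFlowLE_or (S := fun j => {l | x ((fs j).label l) = true}) i ((h i).1 x hi)
  · exact hasUnitFlowLE_and (gs := fun j => dualF (fs j)) fun i =>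
      (h i).2 x ((eval_or_eq_false fs x).1 hx i)

theorem card_leaves_var (i : Fin N) : Fintype.card (Formula.var i).Leaves = 1 := rfl

theorem card_leaves_pos : ∀ φ : Formula N, 0 < Fintype.card φ.Leaves
  | .var i => (card_leaves_var i).symm ▸ one_pos
  | .and _ fs | .or _ fs => (card_leaves_pos (fs 0)).trans_le
      (Fintype.card_le_of_embedding (Function.Embedding.sigmaMk (β := fun i => (fs i).Leaves) 0))

theorem card_leaves_le_of_injective {φ : Formula N} (h : Function.Injective φ.label) :
    Fintype.card φ.Leaves ≤ N :=
  (Fintype.card_le_of_injective _ h).trans_eq (Fintype.card_fin N)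

theorem resistanceBounds_var (i : Fin N) : ResistanceBounds (.var i) (fun _ => 1) 1 1 := by
  have hflow :
      IsUnitFlow (Formula.var i).ends (Formula.var i).src (Formula.var i).snk fun _ => 1 := by
    rw [isUnitFlow_iff]
    intro g
    simp [Formula.ends, src, snk, card_leaves_var]
  refine ⟨fun x hx => ⟨_, hflow, fun _ hl => absurd hx hl, ?_⟩,
    fun x hx => ⟨_, hflow, fun _ hl => absurd hx hl, ?_⟩⟩ <;>
  exact le_of_eq (by simp [energy, dualWeights]; rfl)

theorem exists_resistanceBounds (φ : Formula N) :
    ∃ c : φ.Leaves → ℝ, (∀ e, 0 < c e) ∧ ResistanceBounds φ c (Fintype.card φ.Leaves) 1 := by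
  induction φ with
  | var i =>
    exact ⟨fun _ => 1, fun _ => one_pos, by simpa [card_leaves_var] using resistanceBounds_var i⟩
  | and k fs ih =>
    choose c hpos hc using ih
    refine ⟨fun e => c e.1 e.2, fun e => hpos e.1 e.2, ?_⟩
    convert ResistanceBounds.and hc
    exact_mod_cast Fintype.card_sigma
  | or k fs ih =>
    choose c hpos hc using ih
    have hni (i : Fin (k + 1)) : (0 : ℝ) < Fintype.card (fs i).Leaves :=
      Nat.cast_pos.2 (card_leaves_pos (fs i))
    have hn : (Fintype.card (Formula.or k fs).Leaves : ℝ) =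
        ∑ i, (Fintype.card (fs i).Leaves : ℝ) := by
      exact_mod_cast Fintype.card_sigma
    have hnpos : (0 : ℝ) < Fintype.card (Formula.or k fs).Leaves :=
      Nat.cast_pos.2 (card_leaves_pos _)
    set n : ℝ := (Fintype.card (Formula.or k fs).Leaves : ℝ)
    -- scaling branch `i` by `nᵢ / n` makes `n` a common bound for all branches
    set a : Fin (k + 1) → ℝ := fun i => Fintype.card (fs i).Leaves / n
    have hscaled (i : Fin (k + 1)) : ResistanceBounds (fs i) (fun l => a i * c i l) n (a i) := by
      have := (hc i).const_mul (div_pos (hni i) hnpos)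
      rwa [div_div_cancel₀ (hni i).ne', mul_one] at this
    refine ⟨fun e => a e.1 * c e.1 e.2, fun e => mul_pos (div_pos (hni e.1) hnpos) (hpos e.1 e.2),
      ?_⟩
    convert ResistanceBounds.or hscaled
    rw [← sum_div, ← hn, div_self hnpos.ne']

end Formula

end STConn

open scoped ENNReal in
open STConn Formula in
/-- For every read-once AND-OR formula `φ` on `N` variables there is a positive
weight function `c` on the edges of `G_φ` (with dual weights `c'(e†) = 1/c(e)`
on the edges of the dual graph `G'_φ`, realized as the graph of the De Morgan
dual formula) such that
`max_{φ(x)=1} R_{s,t}(G_φ(x),c) · max_{φ(x)=0} R_{s',t'}(G'_φ(x),c') ≤ 4N`,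
i.e. `W₊(P_{G_φ,c}) · W₋(P_{G_φ,c}) ≤ N`. -/
theorem stmt_13 {N : ℕ} (φ : Formula N) (hro : Function.Injective φ.label) :
    ∃ (c : φ.Leaves → ℝ) (c' : (dualF φ).Leaves → ℝ),
      (∀ e, 0 < c e) ∧ (∀ e', 0 < c' e') ∧
      (∀ (e : φ.Leaves) (e' : (dualF φ).Leaves),
        φ.label e = (dualF φ).label e' → c e * c' e' = 1) ∧
      (⨆ x : {x : Fin N → Bool // φ.eval x = true},
          effResOn φ.ends c {l | x.1 (φ.label l) = true} φ.src φ.snk) *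
      (⨆ x : {x : Fin N → Bool // φ.eval x = false},
          effResOn (dualF φ).ends c' {l | x.1 ((dualF φ).label l) = false}
            (dualF φ).src (dualF φ).snk)
        ≤ (4 * N : ℝ≥0∞) := by
  obtain ⟨c, hpos, hprimal, hdual⟩ := exists_resistanceBounds φ
  refine ⟨c, dualWeights φ c, hpos, fun _ => inv_pos.2 (hpos _), fun e e' he => ?_, ?_⟩
  · rw [hro (he.trans (label_dualEquiv_symm φ e').symm), dualWeights,
      mul_inv_cancel₀ (hpos _).ne']
  calc _ ≤ ENNReal.ofReal (Fintype.card φ.Leaves) * ENNReal.ofReal 1 := by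
        gcongr
        · exact iSup_le fun x => (hprimal x.1 x.2).effResOn_le
        · exact iSup_le fun x => (hdual x.1 x.2).effResOn_le
    _ = Fintype.card φ.Leaves := by simp
    _ ≤ 4 * N := by
        have := card_leaves_le_of_injective hro
        norm_cast
        omega
end

section
/- Let G be formed from graphs G1 and G2 (each with vertices s,t) by parallel composition, and let x = (x¹,x²) be inputs selecting subgraphs. If s,t are disconnected in G(x), then the minimum cut size satisfies C_{s,t}(G(x)) = C_{s,t}(G1(x¹)) + C_{s,t}(G2(x²)). If instead G is formed by series composition, then C_{s,t}(G(x)) = min{C_{s,t}(G1(x¹)), C_{s,t}(G2(x²))}. -/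
/-!
A cut is a Boolean labelling of the vertices, and the edge sets of the two halves are disjoint,
so the size of a cut of the union is the sum of the sizes of its restrictions to the halves.
In a parallel composition the halves share only `s` and `t`, where all `st`-cuts agree, so any
two cuts of the halves glue to a cut of the union and the minimum splits as a sum. In a series
composition a cut of the union labels the middle vertex `m` either `false` or `true`, hence
restricts to an `sm`-cut of `G₁` or an `mt`-cut of `G₂`; conversely a cut of one half extends
over the other half by a labelling that is constant on its edges and so cuts none of them.
-/

open scoped ENNReal

namespace STConn

variable {V E : Type*}

/-- A circulation: an edge-valued function with zero net flow at every vertex. -/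
def IsCirculation [Fintype E] [DecidableEq V] (ends : E → V × V) (θ : E → ℝ) : Prop :=
  ∀ v, netflow ends θ v = 0

/-- `a` and `b` are joined by a walk using only edges in `S`. -/
def ConnectedIn (ends : E → V × V) (S : Set E) (a b : V) : Prop :=
  Relation.ReflTransGen (fun u v => ∃ e ∈ S, ends e = (u, v) ∨ ends e = (v, u)) a b

end STConn
namespace STConn

variable {V E : Type*}

/-- The minimum `st`-cut size of the subgraph with present edge set `S`, counting
crossing edges of the ambient graph: the minimum over `κ : V → {0,1}` with
`κ(s) = 1`, `κ(t) = 0` and `κ` constant across every present edge, of the number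
of ambient edges with endpoints on both sides; `∞` if no such cut exists
(i.e. if `s` and `t` are connected through `S`). -/
noncomputable def minCutOn [Fintype E] (ends : E → V × V) (S : Set E) (s t : V) : ℕ∞ :=
  ⨅ κ : {κ : V → Bool // κ s = true ∧ κ t = false ∧
          ∀ e ∈ S, κ (ends e).1 = κ (ends e).2},
    ((Finset.univ.filter fun e : E => κ.1 (ends e).1 ≠ κ.1 (ends e).2).card : ℕ∞)

end STConn

namespace STConn

open Finset Function

variable {V E E₁ E₂ : Type*}

def ConstOnEdges (ends : E → V × V) (S : Set E) (κ : V → Bool) : Prop :=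
  ∀ e ∈ S, κ (ends e).1 = κ (ends e).2

def IsCut (ends : E → V × V) (S : Set E) (s t : V) (κ : V → Bool) : Prop :=
  κ s = true ∧ κ t = false ∧ ConstOnEdges ends S κ

def cutSize [Fintype E] (ends : E → V × V) (κ : V → Bool) : ℕ :=
  #{e | κ (ends e).1 ≠ κ (ends e).2}

section Congr

variable {ends : E → V × V}

theorem constOnEdges_const (S : Set E) (b : Bool) : ConstOnEdges ends S fun _ => b :=
  fun _ _ => rfl

theorem ConstOnEdges.congr {S : Set E} {κ κ' : V → Bool} (h : ConstOnEdges ends S κ)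
    (hκ : ∀ e v, Touches ends e v → κ v = κ' v) : ConstOnEdges ends S κ' := fun e he => by
  rw [← hκ e _ (Or.inl rfl), ← hκ e _ (Or.inr rfl)]
  exact h e he

theorem ConstOnEdges.update_of_not_touches [DecidableEq V] {S : Set E} {κ : V → Bool} {v : V}
    (h : ConstOnEdges ends S κ) (hv : ∀ e, ¬ Touches ends e v) (b : Bool) :
    ConstOnEdges ends S (update κ v b) :=
  h.congr fun e _ hw => (update_of_ne (by rintro rfl; exact hv e hw) b κ).symm

variable [Fintype E]

theorem cutSize_congr {κ κ' : V → Bool} (hκ : ∀ e v, Touches ends e v → κ v = κ' v) :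
    cutSize ends κ = cutSize ends κ' := by
  unfold cutSize
  congr 1
  exact filter_congr fun e _ => by rw [hκ e _ (Or.inl rfl), hκ e _ (Or.inr rfl)]

theorem cutSize_const (b : Bool) : cutSize ends (fun _ => b) = 0 := by
  simp [cutSize]

theorem cutSize_update_of_not_touches [DecidableEq V] {v : V} (hv : ∀ e, ¬ Touches ends e v)
    (κ : V → Bool) (b : Bool) : cutSize ends (update κ v b) = cutSize ends κ :=
  cutSize_congr fun e _ hw => update_of_ne (by rintro rfl; exact hv e hw) b κ

end Congr

section MinCut

variable [Fintype E] {ends : E → V × V} {S : Set E} {s t : V}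

theorem minCutOn_le {κ : V → Bool} (h : IsCut ends S s t κ) :
    minCutOn ends S s t ≤ cutSize ends κ :=
  iInf_le_of_le ⟨κ, h⟩ le_rfl

theorem le_minCutOn {n : ℕ∞} (h : ∀ κ, IsCut ends S s t κ → n ≤ cutSize ends κ) :
    n ≤ minCutOn ends S s t :=
  le_iInf fun κ => h κ.1 κ.2

end MinCut

section Sum

variable {ends₁ : E₁ → V × V} {ends₂ : E₂ → V × V} {S : Set (E₁ ⊕ E₂)} {s m t : V}

theorem constOnEdges_sumElim {κ : V → Bool} :
    ConstOnEdges (Sum.elim ends₁ ends₂) S κ ↔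
      ConstOnEdges ends₁ (Sum.inl ⁻¹' S) κ ∧ ConstOnEdges ends₂ (Sum.inr ⁻¹' S) κ :=
  ⟨fun h => ⟨fun e => h (.inl e), fun e => h (.inr e)⟩, fun h => Sum.forall.2 h⟩

variable [Fintype E₁] [Fintype E₂]

theorem cutSize_sumElim (κ : V → Bool) :
    cutSize (Sum.elim ends₁ ends₂) κ = cutSize ends₁ κ + cutSize ends₂ κ := by
  rw [cutSize, cutSize, cutSize, card_filter, card_filter, card_filter, Fintype.sum_sum_type]
  rfl

theorem minCutOn_sumElim_le_add {κ₁ κ₂ : V → Bool}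
    (hshared : ∀ e₁ e₂ v, Touches ends₁ e₁ v → Touches ends₂ e₂ v → κ₁ v = κ₂ v)
    (h₁ : IsCut ends₁ (Sum.inl ⁻¹' S) s t κ₁) (h₂ : IsCut ends₂ (Sum.inr ⁻¹' S) s t κ₂) :
    minCutOn (Sum.elim ends₁ ends₂) S s t ≤ cutSize ends₁ κ₁ + cutSize ends₂ κ₂ := by
  classical
  set κ : V → Bool := fun v => if ∃ e, Touches ends₁ e v then κ₁ v else κ₂ v
  have hκ₁ : ∀ e v, Touches ends₁ e v → κ₁ v = κ v := fun e v hv => (if_pos ⟨e, hv⟩).symm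
  have hκ₂ : ∀ e v, Touches ends₂ e v → κ₂ v = κ v := fun e v hv => by
    by_cases h : ∃ e', Touches ends₁ e' v
    · obtain ⟨e', he'⟩ := h
      rw [← hκ₁ e' v he', hshared e' e v he' hv]
    · exact (if_neg h).symm
  have hval : ∀ v b, κ₁ v = b → κ₂ v = b → κ v = b := fun v b h₁ h₂ => by
    dsimp only [κ]
    split_ifs <;> assumption
  have hcut : IsCut (Sum.elim ends₁ ends₂) S s t κ :=
    ⟨hval _ _ h₁.1 h₂.1, hval _ _ h₁.2.1 h₂.2.1,
      constOnEdges_sumElim.2 ⟨h₁.2.2.congr hκ₁, h₂.2.2.congr hκ₂⟩⟩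
  calc minCutOn (Sum.elim ends₁ ends₂) S s t ≤ cutSize (Sum.elim ends₁ ends₂) κ :=
        minCutOn_le hcut
    _ = cutSize ends₁ κ₁ + cutSize ends₂ κ₂ := by
      rw [cutSize_sumElim, cutSize_congr hκ₁, cutSize_congr hκ₂, Nat.cast_add]

theorem minCutOn_add_minCutOn_le :
    minCutOn ends₁ (Sum.inl ⁻¹' S) s t + minCutOn ends₂ (Sum.inr ⁻¹' S) s t ≤
      minCutOn (Sum.elim ends₁ ends₂) S s t :=
  le_minCutOn fun κ ⟨hs, ht, hκ⟩ => by
    rw [cutSize_sumElim, Nat.cast_add]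
    exact add_le_add (minCutOn_le ⟨hs, ht, (constOnEdges_sumElim.1 hκ).1⟩)
      (minCutOn_le ⟨hs, ht, (constOnEdges_sumElim.1 hκ).2⟩)

theorem minCutOn_sumElim_of_parallel
    (hshared : ∀ e₁ e₂ v, Touches ends₁ e₁ v → Touches ends₂ e₂ v → v = s ∨ v = t) :
    minCutOn (Sum.elim ends₁ ends₂) S s t =
      minCutOn ends₁ (Sum.inl ⁻¹' S) s t + minCutOn ends₂ (Sum.inr ⁻¹' S) s t := by
  refine le_antisymm (ENat.le_iInf_add_iInf fun κ₁ κ₂ => ?_) minCutOn_add_minCutOn_le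
  refine minCutOn_sumElim_le_add (fun e₁ e₂ v h₁ h₂ => ?_) κ₁.2 κ₂.2
  rcases hshared e₁ e₂ v h₁ h₂ with rfl | rfl
  · rw [κ₁.2.1, κ₂.2.1]
  · rw [κ₁.2.2.1, κ₂.2.2.1]

theorem min_minCutOn_le :
    min (minCutOn ends₁ (Sum.inl ⁻¹' S) s m) (minCutOn ends₂ (Sum.inr ⁻¹' S) m t) ≤
      minCutOn (Sum.elim ends₁ ends₂) S s t :=
  le_minCutOn fun κ ⟨hs, ht, hκ⟩ => by
    rw [cutSize_sumElim, Nat.cast_add]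
    cases hm : κ m
    · exact min_le_of_left_le <| (minCutOn_le ⟨hs, hm, (constOnEdges_sumElim.1 hκ).1⟩).trans
        le_self_add
    · exact min_le_of_right_le <| (minCutOn_le ⟨hm, ht, (constOnEdges_sumElim.1 hκ).2⟩).trans
        le_add_self

variable [DecidableEq V]

theorem minCutOn_sumElim_le_left (hsm : s ≠ m) (hmt : m ≠ t) (hst : s ≠ t)
    (hshared : ∀ e₁ e₂ v, Touches ends₁ e₁ v → Touches ends₂ e₂ v → v = m)
    (h₁t : ∀ e₁, ¬ Touches ends₁ e₁ t) (h₂s : ∀ e₂, ¬ Touches ends₂ e₂ s) :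
    minCutOn (Sum.elim ends₁ ends₂) S s t ≤ minCutOn ends₁ (Sum.inl ⁻¹' S) s m :=
  le_minCutOn fun κ ⟨hs, hm, hκ⟩ => by
    -- `t` is not a vertex of `G₁` and `s` is not one of `G₂`, so their labels are free.
    have h₁ : IsCut ends₁ (Sum.inl ⁻¹' S) s t (update κ t false) :=
      ⟨by rwa [update_of_ne hst], update_self .., hκ.update_of_not_touches h₁t _⟩
    have h₂ : IsCut ends₂ (Sum.inr ⁻¹' S) s t (update (fun _ => false) s true) :=
      ⟨update_self .., by rw [update_of_ne hst.symm],
        (constOnEdges_const _ _).update_of_not_touches h₂s _⟩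
    have hshared' : ∀ e₁ e₂ v, Touches ends₁ e₁ v → Touches ends₂ e₂ v →
        update κ t false v = update (fun _ => false) s true v := fun e₁ e₂ v hv₁ hv₂ => by
      obtain rfl := hshared e₁ e₂ v hv₁ hv₂
      rw [update_of_ne hmt, update_of_ne hsm.symm, hm]
    calc minCutOn (Sum.elim ends₁ ends₂) S s t
        ≤ cutSize ends₁ (update κ t false) + cutSize ends₂ (update (fun _ => false) s true) :=
          minCutOn_sumElim_le_add hshared' h₁ h₂
      _ = cutSize ends₁ κ := by
          rw [cutSize_update_of_not_touches h₁t, cutSize_update_of_not_touches h₂s,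
            cutSize_const, Nat.cast_zero, add_zero]

theorem minCutOn_sumElim_le_right (hsm : s ≠ m) (hmt : m ≠ t) (hst : s ≠ t)
    (hshared : ∀ e₁ e₂ v, Touches ends₁ e₁ v → Touches ends₂ e₂ v → v = m)
    (h₁t : ∀ e₁, ¬ Touches ends₁ e₁ t) (h₂s : ∀ e₂, ¬ Touches ends₂ e₂ s) :
    minCutOn (Sum.elim ends₁ ends₂) S s t ≤ minCutOn ends₂ (Sum.inr ⁻¹' S) m t :=
  le_minCutOn fun κ ⟨hm, ht, hκ⟩ => by
    have h₁ : IsCut ends₁ (Sum.inl ⁻¹' S) s t (update (fun _ => true) t false) :=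
      ⟨by rw [update_of_ne hst], update_self ..,
        (constOnEdges_const _ _).update_of_not_touches h₁t _⟩
    have h₂ : IsCut ends₂ (Sum.inr ⁻¹' S) s t (update κ s true) :=
      ⟨update_self .., by rwa [update_of_ne hst.symm], hκ.update_of_not_touches h₂s _⟩
    have hshared' : ∀ e₁ e₂ v, Touches ends₁ e₁ v → Touches ends₂ e₂ v →
        update (fun _ => true) t false v = update κ s true v := fun e₁ e₂ v hv₁ hv₂ => by
      obtain rfl := hshared e₁ e₂ v hv₁ hv₂
      rw [update_of_ne hmt, update_of_ne hsm.symm, hm]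
    calc minCutOn (Sum.elim ends₁ ends₂) S s t
        ≤ cutSize ends₁ (update (fun _ => true) t false) + cutSize ends₂ (update κ s true) :=
          minCutOn_sumElim_le_add hshared' h₁ h₂
      _ = cutSize ends₂ κ := by
          rw [cutSize_update_of_not_touches h₁t, cutSize_update_of_not_touches h₂s,
            cutSize_const, Nat.cast_zero, zero_add]

theorem minCutOn_sumElim_of_series (hsm : s ≠ m) (hmt : m ≠ t) (hst : s ≠ t)
    (hshared : ∀ e₁ e₂ v, Touches ends₁ e₁ v → Touches ends₂ e₂ v → v = m)
    (h₁t : ∀ e₁, ¬ Touches ends₁ e₁ t) (h₂s : ∀ e₂, ¬ Touches ends₂ e₂ s) :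
    minCutOn (Sum.elim ends₁ ends₂) S s t =
      min (minCutOn ends₁ (Sum.inl ⁻¹' S) s m) (minCutOn ends₂ (Sum.inr ⁻¹' S) m t) :=
  le_antisymm
    (le_min (minCutOn_sumElim_le_left hsm hmt hst hshared h₁t h₂s)
      (minCutOn_sumElim_le_right hsm hmt hst hshared h₁t h₂s))
    min_minCutOn_le

end Sum

end STConn

open STConn in
/-- Behaviour of the minimum `st`-cut size under parallel and series
composition.  If `G` is the parallel gluing of `G₁` and `G₂` (sharing only the
vertices `s` and `t`) and `s, t` are disconnected in the subgraph `G(x)`, then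
`C_{s,t}(G(x)) = C_{s,t}(G₁(x¹)) + C_{s,t}(G₂(x²))`; if instead `G` is the
series gluing (sharing only the middle vertex `m`) then
`C_{s,t}(G(x)) = min {C_{s,m}(G₁(x¹)), C_{m,t}(G₂(x²))}`. -/
theorem stmt_14 :
    (∀ (V E₁ E₂ : Type) (_ : Fintype E₁) (_ : Fintype E₂)
      (s t : V) (_ : s ≠ t)
      (ends₁ : E₁ → V × V) (ends₂ : E₂ → V × V)
      (_ : ∀ e₁ e₂ v, Touches ends₁ e₁ v → Touches ends₂ e₂ v → v = s ∨ v = t)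
      (x₁ : E₁ → Bool) (x₂ : E₂ → Bool),
      ¬ ConnectedIn (Sum.elim ends₁ ends₂)
          {e | Sum.elim x₁ x₂ e = true} s t →
      minCutOn (Sum.elim ends₁ ends₂) {e | Sum.elim x₁ x₂ e = true} s t
        = minCutOn ends₁ {e | x₁ e = true} s t
          + minCutOn ends₂ {e | x₂ e = true} s t) ∧
    (∀ (V E₁ E₂ : Type) (_ : Fintype E₁) (_ : Fintype E₂)
      (s m t : V) (_ : s ≠ m) (_ : m ≠ t) (_ : s ≠ t)
      (ends₁ : E₁ → V × V) (ends₂ : E₂ → V × V)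
      (_ : ∀ e₁ e₂ v, Touches ends₁ e₁ v → Touches ends₂ e₂ v → v = m)
      (_ : ∀ e₁, ¬ Touches ends₁ e₁ t) (_ : ∀ e₂, ¬ Touches ends₂ e₂ s)
      (x₁ : E₁ → Bool) (x₂ : E₂ → Bool),
      minCutOn (Sum.elim ends₁ ends₂) {e | Sum.elim x₁ x₂ e = true} s t
        = min (minCutOn ends₁ {e | x₁ e = true} s m)
            (minCutOn ends₂ {e | x₂ e = true} m t)) := by
  classical
  refine ⟨fun V E₁ E₂ _ _ s t _ ends₁ ends₂ hshared x₁ x₂ _ => ?_,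
    fun V E₁ E₂ _ _ s m t hsm hmt hst ends₁ ends₂ hshared h₁t h₂s x₁ x₂ => ?_⟩
  · exact minCutOn_sumElim_of_parallel hshared
  · exact minCutOn_sumElim_of_series hsm hmt hst hshared h₁t h₂s
end

section
/- For every depth d ≥ 0 and every input x ∈ {0,1}^{2^d} with NAND_d(x) = 0, the minimum st-cut size of the NAND-tree graph satisfies C_{s,t}(G_{NAND_d}(x)) = 2^{⌊d/2⌋}. -/
open scoped ENNReal

namespace STConn
namespace Formula

/-- Relabel the variables of a formula along `f`. -/
def relabel {N M : ℕ} (f : Fin N → Fin M) : Formula N → Formula M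
  | .var i => .var (f i)
  | .and k fs => .and k fun i => (fs i).relabel f
  | .or k fs => .or k fun i => (fs i).relabel f

end Formula

/-- The embedding of the `i`-th half of `Fin (2^(d+1))`. -/
def embed (d : ℕ) (i : Fin 2) : Fin (2 ^ d) → Fin (2 ^ (d + 1)) := fun j =>
  ⟨i.val * 2 ^ d + j.val, by
    have hj := j.isLt
    have hi : i.val * 2 ^ d ≤ 1 * 2 ^ d :=
      Nat.mul_le_mul_right _ (Nat.lt_succ_iff.mp i.isLt)
    have h2 : 2 ^ (d + 1) = 2 ^ d + 2 ^ d := by ring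
    omega⟩

/-- The depth-`d` NAND-tree formula: a full binary AND-OR tree on `2^d`
variables with `∨`-gates at even distance from the leaves and `∧`-gates at odd
distance (so the root is `∧` iff `d` is odd); `NAND₀` is a single variable. -/
def nandTree : (d : ℕ) → Formula (2 ^ d)
  | 0 => .var ⟨0, Nat.one_pos⟩
  | d + 1 =>
      if (d + 1) % 2 = 1 then
        .and 1 fun i => (nandTree d).relabel (embed d i)
      else
        .or 1 fun i => (nandTree d).relabel (embed d i)

/-- The input to the `i`-th principal subtree of a depth-`(d+1)` NAND-tree. -/
def half (d : ℕ) (i : Fin 2) (x : Fin (2 ^ (d + 1)) → Bool) : Fin (2 ^ d) → Bool :=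
  fun j => x (embed d i j)

end STConn

/-
The minimum cut of a series composition is the minimum over its parts: a cut of the chain must
separate the two ends of some part, and any cut of one part extends to the whole chain without
cutting the other parts. That of a parallel composition is the sum over its parts, which are cut
independently. A leaf contributes `1` when its variable is `0` and `∞` (no cut) when it is `1`.
By induction on the depth, a NAND-tree evaluating to `0` has cut value `2^⌊d/2⌋`: at an `∧` root
(odd `d`, so `⌊d/2⌋ = ⌊(d-1)/2⌋`) the children evaluating to `1` admit no cut and the minimum is
that of a child evaluating to `0`; at an `∨` root (even `d`) both children evaluate to `0` and
their values add up.
-/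

theorem iInf_fin_two {α : Type*} [CompleteLattice α] (f : Fin 2 → α) : ⨅ i, f i = f 0 ⊓ f 1 :=
  eq_of_forall_le_iff fun _ => by simp [Fin.forall_fin_two]

theorem ENat.iInf_pi_sum {ι : Type*} [Fintype ι] {α : ι → Type*} (f : ∀ i, α i → ℕ∞) :
    ⨅ g : (∀ i, α i), ∑ i, f i (g i) = ∑ i, ⨅ a, f i a := by
  by_cases hne : ∀ i, Nonempty (α i)
  · choose g hg using fun i => haveI := hne i; ciInf_mem (f i)
    refine le_antisymm ((iInf_le _ g).trans_eq (by simp only [hg])) ?_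
    exact le_iInf fun g => Finset.sum_le_sum fun i _ => iInf_le _ _
  · push Not at hne
    obtain ⟨i, hi⟩ := hne
    have : IsEmpty (∀ i, α i) := ⟨fun g => hi.false (g i)⟩
    rw [iInf_of_empty, eq_comm, ENat.sum_eq_top]
    exact ⟨i, Finset.mem_univ i, iInf_of_empty _⟩

namespace STConn.Formula

variable {N : ℕ}

/-- `C_{s,t}(G_φ(x))`. -/
noncomputable def minCut (φ : Formula N) (x : Fin N → Bool) : ℕ∞ :=
  minCutOn φ.ends {l | x (φ.label l) = true} φ.src φ.snk

def IsCut (φ : Formula N) (x : Fin N → Bool) (κ : φ.Vert → Bool) : Prop :=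
  κ φ.src = true ∧ κ φ.snk = false ∧
    ∀ l, x (φ.label l) = true → κ (φ.ends l).1 = κ (φ.ends l).2

def crossing (φ : Formula N) (κ : φ.Vert → Bool) : ℕ :=
  (Finset.univ.filter fun l => κ (φ.ends l).1 ≠ κ (φ.ends l).2).card

theorem minCut_eq_iInf (φ : Formula N) (x : Fin N → Bool) :
    minCut φ x = ⨅ κ : {κ // IsCut φ x κ}, (crossing φ κ.1 : ℕ∞) := rfl

theorem crossing_const (φ : Formula N) (b : Bool) : crossing φ (fun _ => b) = 0 := by
  simp [crossing]

theorem minCut_var (i : Fin N) (x : Fin N → Bool) :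
    minCut (.var i) x = if x i then ⊤ else 1 := by
  rw [minCut_eq_iInf]
  split_ifs with hx
  · have : IsEmpty {κ // IsCut (.var i) x κ} :=
      ⟨fun ⟨κ, hs, ht, hl⟩ => nomatch hs.symm.trans ((hl () hx).trans ht)⟩
    exact iInf_of_empty _
  · have hcut : IsCut (.var i) x (Sum.elim Empty.elim id) := ⟨rfl, rfl, fun _ h => absurd h hx⟩
    have hcrossing (κ : {κ // IsCut (.var i) x κ}) : crossing (.var i) κ.1 = 1 := by
      obtain ⟨κ, hs, ht, -⟩ := κ
      simp only [src, snk] at hs ht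
      simp [crossing, ends, hs, ht]
      rfl
    have : Nonempty {κ // IsCut (.var i) x κ} := ⟨⟨_, hcut⟩⟩
    simp [hcrossing]

theorem crossing_or (k : ℕ) (fs : Fin (k + 1) → Formula N) (κ : (Formula.or k fs).Vert → Bool) :
    crossing (.or k fs) κ = ∑ i, crossing (fs i) (κ ∘ vmapOr k fs i) := by
  simp only [crossing, Finset.card_filter]
  exact Fintype.sum_sigma _

theorem crossing_and (k : ℕ) (fs : Fin (k + 1) → Formula N) (κ : (Formula.and k fs).Vert → Bool) :
    crossing (.and k fs) κ = ∑ i, crossing (fs i) (κ ∘ vmapAnd k fs i) := by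
  simp only [crossing, Finset.card_filter]
  exact Fintype.sum_sigma _

section Parallel

variable {k : ℕ} {fs : Fin (k + 1) → Formula N} {x : Fin N → Bool}

theorem IsCut.comp_vmapOr {κ : (Formula.or k fs).Vert → Bool} (h : IsCut (.or k fs) x κ)
    (i : Fin (k + 1)) : IsCut (fs i) x (κ ∘ vmapOr k fs i) :=
  ⟨h.1, h.2.1, fun l hl => h.2.2 ⟨i, l⟩ hl⟩

def glueOr (κs : ∀ i, (fs i).Vert → Bool) : (Formula.or k fs).Vert → Bool
  | .inl ⟨i, w⟩ => κs i (.inl w)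
  | .inr b => b

theorem glueOr_comp_vmapOr {κs : ∀ i, (fs i).Vert → Bool} (h : ∀ i, IsCut (fs i) x (κs i))
    (i : Fin (k + 1)) : glueOr κs ∘ vmapOr k fs i = κs i := by
  funext v
  rcases v with w | _ | _
  · rfl
  · exact (h i).2.1.symm
  · exact (h i).1.symm

theorem isCut_glueOr {κs : ∀ i, (fs i).Vert → Bool} (h : ∀ i, IsCut (fs i) x (κs i)) :
    IsCut (.or k fs) x (glueOr κs) := by
  refine ⟨rfl, rfl, fun ⟨i, l⟩ hl => ?_⟩
  have := congrFun (glueOr_comp_vmapOr h i)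
  exact ((this _).trans ((h i).2.2 l hl)).trans (this _).symm

theorem minCut_or : minCut (.or k fs) x = ∑ i, minCut (fs i) x := by
  let restrict (κ : {κ // IsCut (.or k fs) x κ}) (i : Fin (k + 1)) : {κ // IsCut (fs i) x κ} :=
    ⟨κ.1 ∘ vmapOr k fs i, κ.2.comp_vmapOr i⟩
  have hrestrict : Function.Surjective restrict := fun κs =>
    ⟨⟨glueOr fun i => (κs i).1, isCut_glueOr fun i => (κs i).2⟩,
      funext fun i => Subtype.ext (glueOr_comp_vmapOr (fun i => (κs i).2) i)⟩
  simp only [minCut_eq_iInf, ← ENat.iInf_pi_sum]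
  refine (Eq.trans ?_ (hrestrict.iInf_comp fun κs => ∑ i, (crossing (fs i) (κs i).1 : ℕ∞)))
  simp [restrict, crossing_or]

end Parallel

section Series

variable {k : ℕ} {fs : Fin (k + 1) → Formula N} {x : Fin N → Bool}

theorem vmapAnd_last_snk : vmapAnd k fs (Fin.last k) (fs _).snk = (Formula.and k fs).snk := by
  simp [vmapAnd, snk]

theorem vmapAnd_castSucc_snk (j : Fin k) :
    vmapAnd k fs j.castSucc (fs _).snk = vmapAnd k fs j.succ (fs _).src := by
  simp [vmapAnd, snk, src, j.isLt.ne]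

theorem IsCut.exists_isCut_comp_vmapAnd {κ : (Formula.and k fs).Vert → Bool}
    (h : IsCut (.and k fs) x κ) : ∃ i, IsCut (fs i) x (κ ∘ vmapAnd k fs i) := by
  by_contra! hnone
  have hpropagate (i : Fin (k + 1)) (hi : κ (vmapAnd k fs i (fs i).src) = true) :
      κ (vmapAnd k fs i (fs i).snk) = true := by
    by_contra hi'
    exact hnone i ⟨hi, Bool.of_not_eq_true hi', fun l hl => h.2.2 ⟨i, l⟩ hl⟩
  have hsrc (i : Fin (k + 1)) : κ (vmapAnd k fs i (fs i).src) = true := by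
    induction i using Fin.induction with
    | zero => exact h.1
    | succ j ih => rw [← vmapAnd_castSucc_snk]; exact hpropagate _ ih
  have := hpropagate _ (hsrc (Fin.last k))
  rw [vmapAnd_last_snk, h.2.1] at this
  exact Bool.false_ne_true this

/-- Extends a cut of the `i`-th part of a series composition by putting the earlier parts on the
source side and the later ones on the sink side. -/
def extendAnd (i : Fin (k + 1)) (κi : (fs i).Vert → Bool) : (Formula.and k fs).Vert → Bool
  | .inl (.inl ⟨j, w⟩) =>
      Function.update (fun j (_ : (fs j).Inner) => decide (j < i)) i (fun w => κi (.inl w)) j w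
  | .inl (.inr j) => decide (j.val < i.val)
  | .inr b => b

theorem extendAnd_comp_vmapAnd_self {i : Fin (k + 1)} {κi : (fs i).Vert → Bool}
    (h : IsCut (fs i) x κi) : extendAnd i κi ∘ vmapAnd k fs i = κi := by
  obtain ⟨hs, ht, -⟩ := h
  simp only [src, snk] at hs ht
  funext v
  rcases v with w | _ | _ <;> simp only [Function.comp_apply, vmapAnd]
  · simp [extendAnd]
  · split_ifs <;> simp [extendAnd, ht]
  · split_ifs <;> simp only [extendAnd, hs, decide_eq_true_eq]
    omega

theorem extendAnd_comp_vmapAnd_of_ne {i j : Fin (k + 1)} (κi : (fs i).Vert → Bool) (hji : j ≠ i) :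
    extendAnd i κi ∘ vmapAnd k fs j = fun _ => decide (j < i) := by
  have hji' := Fin.val_ne_of_ne hji
  have hi := i.isLt
  funext v
  rcases v with w | _ | _ <;> simp only [Function.comp_apply, vmapAnd]
  · simp [extendAnd, Function.update_of_ne hji]
  all_goals split_ifs <;> simp only [extendAnd, Fin.lt_def] <;> simp <;> omega

theorem isCut_extendAnd {i : Fin (k + 1)} {κi : (fs i).Vert → Bool} (h : IsCut (fs i) x κi) :
    IsCut (.and k fs) x (extendAnd i κi) := by
  refine ⟨rfl, rfl, fun ⟨j, l⟩ hl => ?_⟩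
  obtain rfl | hji := eq_or_ne j i
  · have := congrFun (extendAnd_comp_vmapAnd_self h)
    exact ((this _).trans (h.2.2 l hl)).trans (this _).symm
  · have := congrFun (extendAnd_comp_vmapAnd_of_ne κi hji)
    exact (this _).trans (this _).symm

theorem minCut_and : minCut (.and k fs) x = ⨅ i, minCut (fs i) x := by
  simp only [minCut_eq_iInf]
  apply le_antisymm
  · refine le_iInf fun i => le_iInf fun κi => ?_
    refine (iInf_le _ ⟨extendAnd i κi.1, isCut_extendAnd κi.2⟩).trans_eq ?_
    rw [crossing_and, Finset.sum_eq_single i, extendAnd_comp_vmapAnd_self κi.2]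
    · intro j _ hji
      rw [extendAnd_comp_vmapAnd_of_ne _ hji, crossing_const]
    · simp
  · refine le_iInf fun κ => ?_
    obtain ⟨i, hi⟩ := κ.2.exists_isCut_comp_vmapAnd
    calc ⨅ i, ⨅ κi : {κi // IsCut (fs i) x κi}, (crossing (fs i) κi.1 : ℕ∞)
        ≤ crossing (fs i) (κ.1 ∘ vmapAnd k fs i) :=
          (iInf_le _ i).trans (iInf_le (fun κi : {κi // IsCut (fs i) x κi} => _) ⟨_, hi⟩)
      _ ≤ crossing (.and k fs) κ.1 := by
        rw [crossing_and]
        exact_mod_cast Finset.single_le_sum (f := fun j => crossing (fs j) (κ.1 ∘ vmapAnd k fs j))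
          (fun _ _ => Nat.zero_le _) (Finset.mem_univ i)

end Series

theorem minCut_relabel {M : ℕ} (f : Fin N → Fin M) (φ : Formula N) (x : Fin M → Bool) :
    minCut (φ.relabel f) x = minCut φ (x ∘ f) := by
  induction φ with
  | var i => simp only [relabel, minCut_var, Function.comp_apply]
  | and k fs ih => simp only [relabel, minCut_and, ih]
  | or k fs ih => simp only [relabel, minCut_or, ih]

theorem eval_relabel {M : ℕ} (f : Fin N → Fin M) (φ : Formula N) (x : Fin M → Bool) :
    (φ.relabel f).eval x = φ.eval (x ∘ f) := by
  induction φ with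
  | var i => rfl
  | and k fs ih => simp only [relabel, eval, ih]
  | or k fs ih => simp only [relabel, eval, ih]

theorem eval_and_two (fs : Fin 2 → Formula N) (x : Fin N → Bool) :
    (Formula.and 1 fs).eval x = ((fs 0).eval x && (fs 1).eval x) := by
  simp [eval, List.finRange_succ]

theorem eval_or_two (fs : Fin 2 → Formula N) (x : Fin N → Bool) :
    (Formula.or 1 fs).eval x = ((fs 0).eval x || (fs 1).eval x) := by
  simp [eval, List.finRange_succ]

end STConn.Formula

namespace STConn

open Formula

theorem minCut_nandTree (d : ℕ) (x : Fin (2 ^ d) → Bool) :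
    minCut (nandTree d) x = if (nandTree d).eval x then ⊤ else 2 ^ (d / 2) := by
  induction d with
  | zero => simp [nandTree, minCut_var, eval]
  | succ d ih =>
    have hchild (i : Fin 2) := ih (x ∘ embed d i)
    by_cases hodd : (d + 1) % 2 = 1
    · have hd : (d + 1) / 2 = d / 2 := by omega
      simp only [nandTree, hodd, if_true, minCut_and, eval_and_two, minCut_relabel, eval_relabel]
      rw [iInf_fin_two, hchild, hchild, hd]
      cases (nandTree d).eval (x ∘ embed d 0) <;> cases (nandTree d).eval (x ∘ embed d 1) <;> simp
    · have hd : (d + 1) / 2 = d / 2 + 1 := by omega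
      simp only [nandTree, hodd, if_false, minCut_or, eval_or_two, minCut_relabel, eval_relabel]
      rw [Fin.sum_univ_two, hchild, hchild, hd]
      cases (nandTree d).eval (x ∘ embed d 0) <;> cases (nandTree d).eval (x ∘ embed d 1) <;>
        simp [pow_succ, mul_two]

end STConn

open STConn Formula in
/-- For every depth `d ≥ 0` and every input `x` with `NAND_d(x) = 0`, the
minimum `st`-cut size of the NAND-tree graph satisfies
`C_{s,t}(G_{NAND_d}(x)) = 2^⌊d/2⌋`. -/
theorem stmt_15 (d : ℕ) (x : Fin (2 ^ d) → Bool)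
    (h : (nandTree d).eval x = false) :
    minCutOn (nandTree d).ends {l | x ((nandTree d).label l) = true}
        (nandTree d).src (nandTree d).snk = (2 ^ (d / 2) : ℕ∞) := by
  show minCut (nandTree d) x = _
  simp [minCut_nandTree, h]
end

section
/- Let φ be an AND-OR formula with maximum fan-in l and ∧-depth d_∧ (the largest number of ∧-nodes on any root-to-leaf path). Then the longest self-avoiding path connecting s and t in the series-parallel graph G_φ has length at most l^{d_∧}. -/
open scoped ENNReal

namespace STConn
namespace Formula

variable {N : ℕ}

/-- The `∧`-depth: the largest number of `∧`-nodes on a root-to-leaf path. -/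
def andDepth : Formula N → ℕ
  | .var _ => 0
  | .and _ fs => (Finset.univ.sup fun i => (fs i).andDepth) + 1
  | .or _ fs => Finset.univ.sup fun i => (fs i).andDepth

/-- The `∨`-depth: the largest number of `∨`-nodes on a root-to-leaf path. -/
def orDepth : Formula N → ℕ
  | .var _ => 0
  | .and _ fs => Finset.univ.sup fun i => (fs i).orDepth
  | .or _ fs => (Finset.univ.sup fun i => (fs i).orDepth) + 1

/-- Every gate of the formula has fan-in at most `l`. -/
def FanInLe (l : ℕ) : Formula N → Prop
  | .var _ => True
  | .and k fs => k + 1 ≤ l ∧ ∀ i, FanInLe l (fs i)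
  | .or k fs => k + 1 ≤ l ∧ ∀ i, FanInLe l (fs i)

end Formula
end STConn

/-!
Induct on `φ`, bounding the self-avoiding paths between the terminals of `G_φ`. The graph `G_φ`
is glued from the graphs of the children along their terminals (the ports). Between two
consecutive visits to ports, a self-avoiding path stays inside one child and runs from one of its
terminals to the other, so it is made of at most `#ports - 1` such stretches, each of length at
most `l ^ d`, where `d` is the largest `∧`-depth of a child. A parallel composition has the two
ports `s`, `t`, which gives `l ^ d`; a series composition of `k + 1 ≤ l` children has `k + 2`
ports, which gives `(k + 1) * l ^ d ≤ l ^ (d + 1)`.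
-/

namespace STConn

section Paths

variable {V : Type*}

def Adj {E : Type*} (ends : E → V × V) (u v : V) : Prop :=
  ∃ e, ends e = (u, v) ∨ ends e = (v, u)

theorem Adj.exists_sigma {ι : Type*} {W F : ι → Type*} {endsW : ∀ i, F i → W i × W i}
    {f : ∀ i, W i → V} {ends : (Σ i, F i) → V × V}
    (h : ∀ i e, ends ⟨i, e⟩ = Prod.map (f i) (f i) (endsW i e)) {u v : V} (huv : Adj ends u v) :
    ∃ i a b, Adj (endsW i) a b ∧ f i a = u ∧ f i b = v := by
  obtain ⟨⟨i, e⟩, he | he⟩ := huv <;> rw [h, Prod.map, Prod.ext_iff] at he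
  · exact ⟨i, _, _, ⟨e, .inl rfl⟩, he⟩
  · exact ⟨i, _, _, ⟨e, .inr rfl⟩, he.2, he.1⟩

def PortPathsLE (r : V → V → Prop) (P : Set V) (M : ℕ) : Prop :=
  ∀ (n : ℕ) (vs : ℕ → V), Set.InjOn vs (Set.Iic n) → (∀ j < n, r (vs j) (vs (j + 1))) →
    vs 0 ∈ P → vs n ∈ P → n ≤ M

theorem PortPathsLE.mono {r : V → V → Prop} {P Q : Set V} {M M' : ℕ}
    (h : PortPathsLE r P M) (hQP : Q ⊆ P) (hMM' : M ≤ M') : PortPathsLE r Q M' :=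
  fun n vs hinj hr h0 hn => (h n vs hinj hr (hQP h0) (hQP hn)).trans hMM'

theorem portPathsLE_card_sub_one [Fintype V] (r : V → V → Prop) (P : Set V) :
    PortPathsLE r P (Fintype.card V - 1) := by
  intro n vs hinj _ _ _
  have := Finset.card_le_card_of_injOn vs (s := Finset.range (n + 1)) (t := Finset.univ)
    (fun _ _ => Finset.mem_univ _) (hinj.mono fun j hj => by simpa [Nat.lt_succ_iff] using hj)
  simp only [Finset.card_range, Finset.card_univ] at this
  omega

theorem PortPathsLE.le_of_fin {r : V → V → Prop} {P : Set V} {M : ℕ} (h : PortPathsLE r P M)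
    {n : ℕ} (vs : Fin (n + 1) → V) (hinj : Function.Injective vs)
    (hr : ∀ i : Fin n, r (vs i.castSucc) (vs i.succ)) (h0 : vs 0 ∈ P)
    (hn : vs (Fin.last n) ∈ P) : n ≤ M := by
  set ws : ℕ → V := fun m => vs ⟨min m n, by omega⟩
  have hws : ∀ m (hm : m ≤ n), ws m = vs ⟨m, by omega⟩ := fun m hm => by
    simp only [ws, min_eq_left hm]
  refine h n ws (fun a ha b hb hab => ?_) (fun j hj => ?_) ?_ ?_
  · rw [hws a ha, hws b hb] at hab
    simpa using hinj hab
  · rw [hws j hj.le, hws (j + 1) hj]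
    exact hr ⟨j, hj⟩
  · rw [hws 0 (Nat.zero_le n)]
    exact h0
  · rw [hws n le_rfl]
    exact hn

theorem le_count_sub_one_mul {B : ℕ → Prop} [DecidablePred B] {M : ℕ} (n : ℕ)
    (h0 : B 0) (hn : B n)
    (hgap : ∀ p q, p < q → q ≤ n → B p → B q → (∀ r, p < r → r < q → ¬ B r) → q - p ≤ M) :
    n ≤ (Nat.count B (n + 1) - 1) * M := by
  induction n using Nat.strong_induction_on with
  | _ n ih =>
  rcases Nat.eq_zero_or_pos n with rfl | hpos
  · simp
  set p := Nat.findGreatest B (n - 1)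
  have hp : B p := Nat.findGreatest_spec (P := B) (Nat.zero_le _) h0
  have hpn : p < n := (Nat.findGreatest_le (n - 1)).trans_lt (by omega)
  have hgap' : ∀ r, p < r → r < n → ¬ B r := fun r hpr hrn =>
    Nat.findGreatest_is_greatest hpr (by omega)
  have hcount : Nat.count B (n + 1) = Nat.count B (p + 1) + 1 := by
    rw [Nat.count_succ_eq_succ_count hn]
    obtain ⟨m, hm⟩ := Nat.exists_eq_add_of_le (Nat.add_one_le_of_lt hpn)
    rw [hm, Nat.count_add, Nat.count_of_forall_not (p := fun k => B (p + 1 + k))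
      fun r hr => hgap' _ (by omega) (by omega), add_zero]
  obtain ⟨c, hc⟩ : ∃ c, Nat.count B (p + 1) = c + 1 :=
    Nat.exists_eq_succ_of_ne_zero (Nat.count_ne_iff_exists.2 ⟨p, p.lt_succ_self, hp⟩)
  have hp_le := ih p hpn hp fun a b hab hb => hgap a b hab (hb.trans hpn.le)
  have hlast := hgap p n hpn le_rfl hp hn hgap'
  rw [hc, Nat.add_sub_cancel] at hp_le
  rw [hcount, hc, Nat.add_sub_cancel, add_mul, one_mul]
  omega

end Paths

section Gluing

variable {V ι : Type*} {W : ι → Type*}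

/-- `(V, r)` is glued from the pieces `(W i, rW i)` along the embeddings `f i`, sharing only
ports. -/
structure IsGlued (r : V → V → Prop) (rW : ∀ i, W i → W i → Prop) (f : ∀ i, W i → V)
    (P : Set V) (PW : ∀ i, Set (W i)) : Prop where
  injective : ∀ i, Function.Injective (f i)
  exists_of_rel : ∀ u v, r u v → ∃ i a b, rW i a b ∧ f i a = u ∧ f i b = v
  mem_iff : ∀ i a, f i a ∈ P ↔ a ∈ PW i
  eq_of_eq : ∀ i j a b, a ∉ PW i → b ∉ PW j → f i a = f j b → i = j

variable {r : V → V → Prop} {rW : ∀ i, W i → W i → Prop} {f : ∀ i, W i → V} {P : Set V}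
  {PW : ∀ i, Set (W i)} {M : ℕ}

/-- A stretch of a path between two consecutive visits to `P` stays inside one piece, where it is
a path between two ports. -/
theorem IsGlued.sub_le (hG : IsGlued r rW f P PW) (hW : ∀ i, PortPathsLE (rW i) (PW i) M)
    {n : ℕ} {vs : ℕ → V} (hinj : Set.InjOn vs (Set.Iic n)) (hr : ∀ j < n, r (vs j) (vs (j + 1)))
    {p q : ℕ} (hpq : p < q) (hqn : q ≤ n) (hp : vs p ∈ P) (hq : vs q ∈ P)
    (hmid : ∀ j, p < j → j < q → vs j ∉ P) : q - p ≤ M := by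
  obtain ⟨i, a₀, b₀, hab₀, ha₀, hb₀⟩ := hG.exists_of_rel _ _ (hr p (by omega))
  have hedge : ∀ j, p ≤ j → j < q → ∃ a b, rW i a b ∧ f i a = vs j ∧ f i b = vs (j + 1) := by
    intro j hpj
    induction j, hpj using Nat.le_induction with
    | base => exact fun _ => ⟨a₀, b₀, hab₀, ha₀, hb₀⟩
    | succ j hpj ih =>
      intro hjq
      obtain ⟨-, b, -, -, hb⟩ := ih (by omega)
      obtain ⟨i', a', b', hab', ha', hb'⟩ := hG.exists_of_rel _ _ (hr (j + 1) (by omega))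
      have hj : vs (j + 1) ∉ P := hmid (j + 1) (by omega) hjq
      obtain rfl : i' = i := hG.eq_of_eq i' i a' b (mt (hG.mem_iff i' a').2 (ha' ▸ hj))
        (mt (hG.mem_iff i b).2 (hb ▸ hj)) (ha'.trans hb.symm)
      exact ⟨a', b', hab', ha', hb'⟩
  have : Nonempty (W i) := ⟨a₀⟩
  set ws : ℕ → W i := fun m => Function.invFun (f i) (vs (p + m))
  have hws : ∀ m ≤ q - p, f i (ws m) = vs (p + m) := by
    intro m hm
    apply Function.invFun_eq
    rcases hm.lt_or_eq with hm | rfl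
    · obtain ⟨a, -, -, ha, -⟩ := hedge (p + m) (by omega) (by omega)
      exact ⟨a, ha⟩
    · obtain ⟨-, b, -, -, hb⟩ := hedge (q - 1) (by omega) (by omega)
      exact ⟨b, hb.trans (by congr 1; omega)⟩
  refine hW i (q - p) ws (fun a ha b hb hab => ?_) (fun j hj => ?_) ?_ ?_
  · rw [Set.mem_Iic] at ha hb
    have := hinj (x₁ := p + a) (x₂ := p + b) (Set.mem_Iic.2 (by omega))
      (Set.mem_Iic.2 (by omega)) ((hws a ha).symm.trans ((congrArg (f i) hab).trans (hws b hb)))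
    omega
  · obtain ⟨a, b, hab, ha, hb⟩ := hedge (p + j) (by omega) (by omega)
    rwa [hG.injective i ((hws j hj.le).trans ha.symm),
      hG.injective i ((hws (j + 1) hj).trans hb.symm)]
  · exact (hG.mem_iff i _).1 ((hws 0 (Nat.zero_le _)).symm ▸ hp)
  · exact (hG.mem_iff i _).1 ((hws (q - p) le_rfl).symm ▸ (by rwa [Nat.add_sub_cancel' hpq.le]))

theorem IsGlued.portPathsLE (hG : IsGlued r rW f P PW) (hW : ∀ i, PortPathsLE (rW i) (PW i) M)
    (hP : P.Finite) : PortPathsLE r P ((P.ncard - 1) * M) := by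
  classical
  intro n vs hinj hr h0 hn
  have hcount : Nat.count (vs · ∈ P) (n + 1) ≤ P.ncard := by
    rw [Nat.count_eq_card_filter_range, ← Set.ncard_coe_finset]
    refine Set.ncard_le_ncard_of_injOn vs (fun j hj => by simp_all) (hinj.mono ?_) hP
    intro j hj
    simp only [Finset.coe_filter, Finset.mem_range, Set.mem_ofPred_eq] at hj
    exact Set.mem_Iic.2 (by omega)
  calc n ≤ (Nat.count (vs · ∈ P) (n + 1) - 1) * M :=
        le_count_sub_one_mul n h0 hn fun p q hpq hqn hp hq hmid =>
          hG.sub_le hW hinj hr hpq hqn hp hq hmid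
    _ ≤ (P.ncard - 1) * M := by gcongr

end Gluing

namespace Formula

variable {N : ℕ}

theorem vmapAnd_injective (k : ℕ) (fs : Fin (k + 1) → Formula N) (i : Fin (k + 1)) :
    Function.Injective (vmapAnd k fs i) := by
  rintro (a | _ | _) (b | _ | _) h <;> simp only [vmapAnd] at h
  all_goals (try split_ifs at h) <;> try replace h := Sum.inl.inj h
  -- `Inner (and k fs)` has to be unfolded to a sum type before `simp` can split equalities in it.
  all_goals try change @Eq ((Σ j, (fs j).Inner) ⊕ Fin k) _ _ at h
  all_goals simp [Fin.ext_iff] at h ⊢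
  all_goals omega

theorem vmapOr_injective (k : ℕ) (fs : Fin (k + 1) → Formula N) (i : Fin (k + 1)) :
    Function.Injective (vmapOr k fs i) := by
  have : vmapOr k fs i = Sum.map (Sigma.mk (β := fun j => (fs j).Inner) i) id := by
    ext (_ | _) <;> rfl
  rw [this]
  exact sigma_mk_injective.sumMap Function.injective_id

/-- `s`, `t` and the `k` junction vertices of a series composition. -/
def andPorts (k : ℕ) (fs : Fin (k + 1) → Formula N) : Set (Formula.and k fs).Vert :=
  Set.range Sum.inr ∪ Set.range fun j : Fin k => Sum.inl (Sum.inr j)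

theorem vmapAnd_mem_andPorts_iff {k : ℕ} {fs : Fin (k + 1) → Formula N} {i : Fin (k + 1)}
    {a : (fs i).Vert} : vmapAnd k fs i a ∈ andPorts k fs ↔ a ∈ Set.range Sum.inr := by
  rcases a with w | _ | _
  · simpa [andPorts, vmapAnd] using nofun
  all_goals simp only [andPorts, vmapAnd]
  all_goals split_ifs <;> simp

theorem isGlued_and (k : ℕ) (fs : Fin (k + 1) → Formula N) :
    IsGlued (Adj (Formula.and k fs).ends) (fun i => Adj (fs i).ends) (vmapAnd k fs)
      (andPorts k fs) (fun _ => Set.range Sum.inr) where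
  injective := vmapAnd_injective k fs
  exists_of_rel _ _ := Adj.exists_sigma fun _ _ => rfl
  mem_iff _ _ := vmapAnd_mem_andPorts_iff
  eq_of_eq i j a b ha hb h := by
    rcases a with w | a
    · rcases b with w' | b
      · exact (Sigma.mk.inj_iff.1 (Sum.inl.inj (Sum.inl.inj h))).1
      · exact absurd ⟨b, rfl⟩ hb
    · exact absurd ⟨a, rfl⟩ ha

theorem isGlued_or (k : ℕ) (fs : Fin (k + 1) → Formula N) :
    IsGlued (Adj (Formula.or k fs).ends) (fun i => Adj (fs i).ends) (vmapOr k fs)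
      (Set.range Sum.inr) (fun _ => Set.range Sum.inr) where
  injective := vmapOr_injective k fs
  exists_of_rel _ _ := Adj.exists_sigma fun _ _ => rfl
  mem_iff _ a := by rcases a with w | b <;> simp [vmapOr]
  eq_of_eq i j a b ha hb h := by
    rcases a with w | a
    · rcases b with w' | b
      · exact (Sigma.mk.inj_iff.1 (Sum.inl.inj h)).1
      · exact absurd ⟨b, rfl⟩ hb
    · exact absurd ⟨a, rfl⟩ ha

theorem ncard_andPorts_le (k : ℕ) (fs : Fin (k + 1) → Formula N) :
    (andPorts k fs).ncard ≤ k + 2 := by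
  have hinj : Function.Injective
      fun j : Fin k => (Sum.inl (Sum.inr j) : (Formula.and k fs).Vert) :=
    fun _ _ h => Sum.inr.inj (Sum.inl.inj h)
  refine (Set.ncard_union_le _ _).trans ?_
  simp [Set.ncard_range_of_injective hinj, add_comm]

theorem pow_andDepth_le_pow_sup {l k : ℕ} (hl : 0 < l) (fs : Fin (k + 1) → Formula N)
    (i : Fin (k + 1)) : l ^ (fs i).andDepth ≤ l ^ Finset.univ.sup fun j => (fs j).andDepth :=
  Nat.pow_le_pow_right hl (Finset.le_sup (f := fun j => (fs j).andDepth) (Finset.mem_univ i))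

theorem portPathsLE_andDepth {l : ℕ} {φ : Formula N} (hl : FanInLe l φ) :
    PortPathsLE (Adj φ.ends) (Set.range Sum.inr) (l ^ φ.andDepth) := by
  induction φ with
  | var v =>
    exact (portPathsLE_card_sub_one (V := Empty ⊕ Bool) _ _).mono subset_rfl
      (by simp [andDepth])
  | and k fs ih =>
    obtain ⟨hk, hfs⟩ := hl
    set d := Finset.univ.sup fun i => (fs i).andDepth
    have hW := fun i => (ih i (hfs i)).mono subset_rfl (pow_andDepth_le_pow_sup (by omega) fs i)
    refine ((isGlued_and k fs).portPathsLE hW ((Set.finite_range _).union (Set.finite_range _))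
      ).mono Set.subset_union_left ?_
    calc ((andPorts k fs).ncard - 1) * l ^ d ≤ (k + 1) * l ^ d := by
          have := ncard_andPorts_le k fs
          gcongr
          omega
      _ ≤ l * l ^ d := by gcongr
      _ = l ^ (Formula.and k fs).andDepth := (pow_succ' l d).symm
  | or k fs ih =>
    obtain ⟨hk, hfs⟩ := hl
    have hW := fun i => (ih i (hfs i)).mono subset_rfl (pow_andDepth_le_pow_sup (by omega) fs i)
    refine ((isGlued_or k fs).portPathsLE hW (Set.finite_range _)).mono subset_rfl ?_
    simp [andDepth]

end Formula
end STConn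

open STConn Formula in
/-- Every self-avoiding path connecting the terminals `s` and `t` in the
series-parallel graph `G_φ` of an AND-OR formula `φ` with fan-in at most `l`
and `∧`-depth `d_∧` has length at most `l^{d_∧}`. -/
theorem stmt_17 {N : ℕ} (φ : Formula N) (l : ℕ) (hl : FanInLe l φ)
    (n : ℕ) (vs : Fin (n + 1) → φ.Vert) (hinj : Function.Injective vs)
    (h0 : vs 0 = φ.src) (hn : vs (Fin.last n) = φ.snk)
    (hadj : ∀ i : Fin n, ∃ e : φ.Leaves,
      φ.ends e = (vs i.castSucc, vs i.succ) ∨ φ.ends e = (vs i.succ, vs i.castSucc)) :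
    n ≤ l ^ φ.andDepth :=
  (portPathsLE_andDepth hl).le_of_fin vs hinj hadj ⟨true, h0.symm⟩ ⟨false, hn.symm⟩
end
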